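/- Let H be an infinite-dimensional separable complex Hilbert space and f : G_∞(H) → G_∞(H) a map sending every pair of subspaces to an equivalent pair, with associated decomposition f(X) = L(X) ⊕ O(X) (L a linear or conjugate-linear isometry, O(X) ⊥ range(L)). If O(X) = 0 for some X ∈ G_∞(H), then O(Y) = 0 for every Y ∈ G_∞(H), i.e., f(Y) = L(Y) for all Y. -/

import Mathlib

/-!
If `O A = 0`, then `f A = L(A)` is orthogonal to every `O B`. Write `{f A, f B} = {T A, T B}`
with `T` a linear isometry. In the matching `f A = T A`, `f B = T B`, a vector `T b ∈ O B`
satisfies `⟪a, b⟫ = ⟪T a, T b⟫ = 0` for all `a ∈ A`, so `b ∈ B ⊓ Aᗮ`; symmetrically in the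
crossed matching `a ∈ A ⊓ Bᗮ`. Hence `O B = 0` whenever `A` and `B` are in generic position
(`A ⊓ Bᗮ = B ⊓ Aᗮ = 0`), and also whenever `B ≤ A`, since in the crossed matching
`L(A) = T B ≤ T A = f B` forces `A = B`.

For mutually orthogonal orthonormal sequences `u`, `v`, the closed span of `u + v` is in generic
position with the closed spans of `u` and of `v`, so `O` vanishes on the latter once it vanishes on
the former. Starting from `X`, shrink to the closed span of an orthonormal sequence `x ⊆ X`, move
to that of an orthonormal sequence `w ⊆ Yᗮ` orthogonal to `x`, and then to `Y`, which by
separability is the closed span of an orthonormal sequence.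
-/

variable {H : Type} [NormedAddCommGroup H] [InnerProductSpace ℂ H] [CompleteSpace H]

/-- Membership in the Grassmannian `G_∞(H)`. -/
def inGinf (X : Submodule ℂ H) : Prop :=
  IsClosed (X : Set H) ∧ ¬ FiniteDimensional ℂ X ∧ ¬ FiniteDimensional ℂ Xᗮ

/-- `f` sends every pair of subspaces of `G_∞(H)` to an equivalent pair. -/
def SendsPairsToEquiv (f : Submodule ℂ H → Submodule ℂ H) : Prop :=
  ∀ X Y : Submodule ℂ H, inGinf X → inGinf Y →
    ∃ L : H →ₗᵢ[ℂ] H,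
      ({f X, f Y} : Set (Submodule ℂ H)) = {X.map L.toLinearMap, Y.map L.toLinearMap}

/-- `L : H → H` is a linear or conjugate-linear isometry. -/
def IsLinOrConjIsometry (L : H → H) : Prop :=
  (∃ T : H →ₗᵢ[ℂ] H, ∀ x, L x = T x) ∨
  (∃ T : H →ₛₗᵢ[starRingEnd ℂ] H, ∀ x, L x = T x)

/-- `L` and `O` decompose `f` as in the structure theorem. -/
def Decomposes (f : Submodule ℂ H → Submodule ℂ H) (L : H → H)
    (O : Submodule ℂ H → Submodule ℂ H) : Prop :=
  ∀ X : Submodule ℂ H, inGinf X →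
    IsClosed ((O X : Set H)) ∧
    (∀ y ∈ O X, ∀ x : H, inner ℂ (L x) y = (0 : ℂ)) ∧
    f X = Submodule.span ℂ (L '' X) ⊔ O X

set_option linter.unusedSectionVars false

open Submodule Set
open scoped InnerProductSpace

theorem apply_mem_span_image_iff_mem {R R₂ M M₂ : Type*} [Semiring R] [Semiring R₂]
    [AddCommMonoid M] [AddCommMonoid M₂] [Module R M] [Module R₂ M₂] {σ : R →+* R₂}
    [RingHomSurjective σ] {f : M →ₛₗ[σ] M₂} (hf : Function.Injective f) (p : Submodule R M)
    {x : M} : f x ∈ span R₂ (f '' p) ↔ x ∈ p := by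
  rw [span_image, span_eq, ← SetLike.mem_coe, map_coe, hf.mem_set_image, SetLike.mem_coe]

section

variable {𝕜 E : Type*} [RCLike 𝕜] [NormedAddCommGroup E] [InnerProductSpace 𝕜 E]

theorem not_finiteDimensional_of_inner_eq_zero {ι : Type*} [Infinite ι] {S : Submodule 𝕜 E}
    {v : ι → E} (hv : ∀ i, v i ≠ 0) (ho : Pairwise fun i j => ⟪v i, v j⟫_𝕜 = 0)
    (hS : ∀ i, v i ∈ S) : ¬ FiniteDimensional 𝕜 S := fun _ =>
  Module.Finite.not_linearIndependent_of_infinite (fun i => (⟨v i, hS i⟩ : S))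
    (.of_comp S.subtype (linearIndependent_of_ne_zero_of_inner_eq_zero hv ho))

theorem Orthonormal.not_finiteDimensional {ι : Type*} [Infinite ι] {S : Submodule 𝕜 E}
    {v : ι → E} (hv : Orthonormal 𝕜 v) (hS : ∀ i, v i ∈ S) : ¬ FiniteDimensional 𝕜 S :=
  not_finiteDimensional_of_inner_eq_zero hv.ne_zero hv.2 hS

theorem exists_norm_eq_one_mem_orthogonal {D : Submodule 𝕜 E} (hD : ¬ FiniteDimensional 𝕜 D)
    (K : Submodule 𝕜 E) [FiniteDimensional 𝕜 K] : ∃ x ∈ D, ‖x‖ = 1 ∧ x ∈ Kᗮ := by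
  obtain ⟨d, hdK, hd0⟩ : ∃ d : D, K.orthogonalProjectionOnto d = 0 ∧ d ≠ 0 := by
    by_contra! h
    refine hD (Module.Finite.of_injective
      ((K.orthogonalProjectionOnto : E →ₗ[𝕜] K) ∘ₗ D.subtype) ?_)
    rwa [← LinearMap.ker_eq_bot, LinearMap.ker_eq_bot']
  have hd0' : (d : E) ≠ 0 := by simpa using hd0
  exact ⟨((‖(d : E)‖ : 𝕜))⁻¹ • (d : E), D.smul_mem _ d.2, norm_smul_inv_norm hd0',
    Kᗮ.smul_mem _ (orthogonalProjectionOnto_eq_zero_iff.mp hdK)⟩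

theorem exists_orthonormal_forall_mem {D : ℕ → Submodule 𝕜 E}
    (hD : ∀ n, ¬ FiniteDimensional 𝕜 (D n)) : ∃ u : ℕ → E, Orthonormal 𝕜 u ∧ ∀ n, u n ∈ D n := by
  choose next hnextD hnext1 hnextK using
    fun n (K : {K : Submodule 𝕜 E // FiniteDimensional 𝕜 K}) =>
      have := K.2; exists_norm_eq_one_mem_orthogonal (hD n) K.1
  -- `K n` is the span of the first `n` chosen vectors
  let K : ℕ → {K : Submodule 𝕜 E // FiniteDimensional 𝕜 K} := fun n =>
    Nat.rec ⟨⊥, inferInstance⟩ (fun n K => ⟨K.1 ⊔ 𝕜 ∙ next n K, have := K.2; inferInstance⟩) n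
  have hmem : ∀ {m n}, m < n → next m (K m) ∈ (K n).1 := by
    intro m n hmn
    induction n with
    | zero => omega
    | succ n ih =>
      rcases Nat.lt_succ_iff_lt_or_eq.mp hmn with h | rfl
      · exact le_sup_left (a := (K n).1) (ih h)
      · exact le_sup_right (a := (K m).1) (mem_span_singleton_self _)
  refine ⟨fun n => next n (K n), ⟨fun n => hnext1 n _, fun m n hmn => ?_⟩, fun n => hnextD n _⟩
  rcases lt_or_gt_of_ne hmn with h | h
  · exact (mem_orthogonal _ _).mp (hnextK n (K n)) _ (hmem h)
  · exact inner_eq_zero_symm.mp ((mem_orthogonal _ _).mp (hnextK m (K m)) _ (hmem h))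

theorem exists_orthonormal_pair {X V : Submodule 𝕜 E} (hX : ¬ FiniteDimensional 𝕜 X)
    (hV : ¬ FiniteDimensional 𝕜 V) :
    ∃ x v : ℕ → E, Orthonormal 𝕜 x ∧ Orthonormal 𝕜 v ∧ (∀ m n, ⟪x m, v n⟫_𝕜 = 0) ∧
      (∀ n, x n ∈ X) ∧ ∀ n, v n ∈ V := by
  obtain ⟨u, hu, huD⟩ := exists_orthonormal_forall_mem (D := fun n => if Even n then X else V)
    fun n => by
      by_cases h : Even n
      · rwa [if_pos h]
      · rwa [if_neg h]
  refine ⟨fun n => u (2 * n), fun n => u (2 * n + 1), hu.comp _ fun m n h => by simpa using h,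
    hu.comp _ fun m n h => by simpa using h, fun m n => hu.2 (by omega), fun n => ?_, fun n => ?_⟩
  · simpa using huD (2 * n)
  · simpa [Nat.even_add_one] using huD (2 * n + 1)

theorem Orthonormal.countable [TopologicalSpace.SeparableSpace E] {ι : Type*} {v : ι → E}
    (hv : Orthonormal 𝕜 v) : Countable ι := by
  refine Pairwise.countable_of_isOpen_disjoint (s := fun i => Metric.ball (v i) 2⁻¹)
    (fun i j hij => Metric.ball_disjoint_ball ?_) (fun _ => Metric.isOpen_ball)
    (fun _ => Metric.nonempty_ball.mpr (by norm_num))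
  have hsq : ‖v i - v j‖ ^ 2 = 2 := by
    rw [@norm_sub_sq 𝕜, hv.2 hij, hv.1 i, hv.1 j]
    norm_num
  rw [dist_eq_norm]
  nlinarith [norm_nonneg (v i - v j)]

theorem exists_hilbertBasis_nat [CompleteSpace E] [TopologicalSpace.SeparableSpace E]
    (hE : ¬ FiniteDimensional 𝕜 E) : Nonempty (HilbertBasis ℕ 𝕜 E) := by
  obtain ⟨w, b, -⟩ := exists_hilbertBasis 𝕜 E
  have := b.orthonormal.countable
  have : Infinite w := by
    refine not_finite_iff_infinite.mp fun _ => hE ?_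
    let := Fintype.ofFinite w
    exact Module.Finite.of_basis b.toOrthonormalBasis.toBasis
  obtain ⟨_⟩ := nonempty_denumerable w
  let e : ℕ ≃ w := (Denumerable.eqv w).symm
  refine ⟨HilbertBasis.mkOfOrthogonalEqBot (b.orthonormal.comp e e.injective) ?_⟩
  rw [EquivLike.range_comp, ← orthogonal_closure, b.dense_span, top_orthogonal_eq_bot]

theorem exists_orthonormal_closure_span_range_eq [CompleteSpace E]
    [TopologicalSpace.SeparableSpace E] {K : Submodule 𝕜 E} (hK : IsClosed (K : Set E))
    (hKfin : ¬ FiniteDimensional 𝕜 K) :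
    ∃ g : ℕ → E, Orthonormal 𝕜 g ∧ (span 𝕜 (range g)).topologicalClosure = K := by
  have : CompleteSpace K := hK.completeSpace_coe
  have : TopologicalSpace.SeparableSpace K :=
    (TopologicalSpace.IsSeparable.of_separableSpace _).separableSpace
  obtain ⟨b⟩ := exists_hilbertBasis_nat hKfin
  refine ⟨K.subtype ∘ b, b.orthonormal.comp_linearIsometry K.subtypeₗᵢ, le_antisymm
    (topologicalClosure_minimal _ (span_le.mpr (range_subset_iff.mpr fun n => (b n).2)) hK) ?_⟩
  calc K = (span 𝕜 (range b)).topologicalClosure.map (K.subtypeL : K →ₗ[𝕜] E) := by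
        rw [b.dense_span, Submodule.map_top]; exact (range_subtype K).symm
    _ ≤ ((span 𝕜 (range b)).map (K.subtypeL : K →ₗ[𝕜] E)).topologicalClosure :=
        (span 𝕜 (range b)).topologicalClosure_map K.subtypeL
    _ = _ := by rw [map_span, ← range_comp]; rfl

theorem mem_orthogonal_closure_span_range_iff {ι : Type*} {u : ι → E} {x : E} :
    x ∈ (span 𝕜 (range u)).topologicalClosureᗮ ↔ ∀ i, ⟪u i, x⟫_𝕜 = 0 := by
  rw [orthogonal_closure, ← span_singleton_le_iff_mem, ← IsOrtho, isOrtho_comm, isOrtho_span]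
  simp

theorem eq_zero_of_mem_closure_span_range {ι : Type*} {u : ι → E} {x : E}
    (hx : x ∈ (span 𝕜 (range u)).topologicalClosure) (h : ∀ i, ⟪u i, x⟫_𝕜 = 0) : x = 0 :=
  (mem_bot 𝕜).mp ((inf_orthogonal_eq_bot _).le ⟨hx, mem_orthogonal_closure_span_range_iff.mpr h⟩)

theorem eq_bot_of_le_map_of_isOrtho {F : Type*} [NormedAddCommGroup F] [InnerProductSpace 𝕜 F]
    (T : E →ₗᵢ[𝕜] F) {P Q : Submodule 𝕜 E} {W : Submodule 𝕜 F} (hWQ : W ≤ Q.map T.toLinearMap)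
    (hPW : P.map T.toLinearMap ⟂ W) (hQP : Q ⊓ Pᗮ = ⊥) : W = ⊥ := by
  refine eq_bot_iff.mpr fun w hw => ?_
  obtain ⟨q, hq, rfl⟩ := mem_map.mp (hWQ hw)
  have hqP : q ∈ Pᗮ := (mem_orthogonal _ _).mpr fun p hp => by
    rw [← T.inner_map_map]
    exact hPW.inner_eq (mem_map_of_mem hp) hw
  have hq0 : q = 0 := (mem_bot 𝕜).mp (hQP ▸ mem_inf.mpr ⟨hq, hqP⟩)
  simp [hq0]

section Diagonal

variable {ι : Type*} {u v : ι → E}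

theorem inner_add_sub_eq_zero (hu : Orthonormal 𝕜 u) (hv : Orthonormal 𝕜 v)
    (huv : ∀ i j, ⟪u i, v j⟫_𝕜 = 0) (i j : ι) : ⟪u i + v i, u j - v j⟫_𝕜 = 0 := by
  classical
  simp [inner_add_left, inner_sub_right, huv, inner_eq_zero_symm.mp (huv _ _),
    orthonormal_iff_ite.mp hu, orthonormal_iff_ite.mp hv]

theorem pairwise_inner_add_eq_zero (hu : Orthonormal 𝕜 u) (hv : Orthonormal 𝕜 v)
    (huv : ∀ i j, ⟪u i, v j⟫_𝕜 = 0) : Pairwise fun i j => ⟪u i + v i, u j + v j⟫_𝕜 = 0 :=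
  fun i j hij => by
    simp [inner_add_left, inner_add_right, huv, inner_eq_zero_symm.mp (huv _ _), hu.2 hij,
      hv.2 hij]

theorem pairwise_inner_sub_eq_zero (hu : Orthonormal 𝕜 u) (hv : Orthonormal 𝕜 v)
    (huv : ∀ i j, ⟪u i, v j⟫_𝕜 = 0) : Pairwise fun i j => ⟪u i - v i, u j - v j⟫_𝕜 = 0 :=
  fun i j hij => by
    simp [inner_sub_left, inner_sub_right, huv, inner_eq_zero_symm.mp (huv _ _), hu.2 hij,
      hv.2 hij]

theorem add_ne_zero_of_orthonormal (hu : Orthonormal 𝕜 u) (huv : ∀ i j, ⟪u i, v j⟫_𝕜 = 0)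
    (i : ι) : u i + v i ≠ 0 := fun h => by
  simpa [inner_add_right, huv, inner_self_eq_norm_sq_to_K, hu.1 i] using congrArg (⟪u i, ·⟫_𝕜) h

theorem sub_ne_zero_of_orthonormal (hu : Orthonormal 𝕜 u) (huv : ∀ i j, ⟪u i, v j⟫_𝕜 = 0)
    (i : ι) : u i - v i ≠ 0 := fun h => by
  simpa [inner_sub_right, huv, inner_self_eq_norm_sq_to_K, hu.1 i] using congrArg (⟪u i, ·⟫_𝕜) h

theorem closure_span_inf_orthogonal_closure_span_add_eq_bot (huv : ∀ i j, ⟪u i, v j⟫_𝕜 = 0) :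
    (span 𝕜 (range u)).topologicalClosure ⊓ (span 𝕜 (range (u + v))).topologicalClosureᗮ = ⊥ := by
  refine eq_bot_iff.mpr fun z ⟨hzU, hzC⟩ => (mem_bot 𝕜).mpr ?_
  have hvz : ∀ i, ⟪v i, z⟫_𝕜 = 0 := fun i =>
    inner_left_of_mem_orthogonal hzU (mem_orthogonal_closure_span_range_iff.mpr (huv · i))
  refine eq_zero_of_mem_closure_span_range hzU fun i => ?_
  simpa [inner_add_left, hvz] using mem_orthogonal_closure_span_range_iff.mp hzC i

theorem closure_span_add_inf_orthogonal_closure_span_eq_bot (hu : Orthonormal 𝕜 u)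
    (hv : Orthonormal 𝕜 v) (huv : ∀ i j, ⟪u i, v j⟫_𝕜 = 0) :
    (span 𝕜 (range (u + v))).topologicalClosure ⊓ (span 𝕜 (range u)).topologicalClosureᗮ = ⊥ := by
  refine eq_bot_iff.mpr fun z ⟨hzC, hzU⟩ => (mem_bot 𝕜).mpr ?_
  have huz := mem_orthogonal_closure_span_range_iff.mp hzU
  have hreflect : ∀ i, ⟪u i - v i, z⟫_𝕜 = 0 := fun i =>
    inner_left_of_mem_orthogonal hzC
      (mem_orthogonal_closure_span_range_iff.mpr (inner_add_sub_eq_zero hu hv huv · i))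
  refine eq_zero_of_mem_closure_span_range hzC fun i => ?_
  have := hreflect i
  rw [inner_sub_left, huz i, zero_sub, neg_eq_zero] at this
  simp [inner_add_left, huz i, this]

end Diagonal

end

theorem inGinf_closure_span_range {u v : ℕ → H} (hu : Orthonormal ℂ u) (hv : Orthonormal ℂ v)
    (huv : ∀ i j, ⟪u i, v j⟫_ℂ = 0) : inGinf (span ℂ (range u)).topologicalClosure :=
  ⟨isClosed_topologicalClosure _,
    hu.not_finiteDimensional fun i => le_topologicalClosure _ (subset_span ⟨i, rfl⟩),
    hv.not_finiteDimensional fun j => mem_orthogonal_closure_span_range_iff.mpr (huv · j)⟩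

theorem inGinf_closure_span_range_add {u v : ℕ → H} (hu : Orthonormal ℂ u)
    (hv : Orthonormal ℂ v) (huv : ∀ i j, ⟪u i, v j⟫_ℂ = 0) :
    inGinf (span ℂ (range (u + v))).topologicalClosure :=
  ⟨isClosed_topologicalClosure _,
    not_finiteDimensional_of_inner_eq_zero (add_ne_zero_of_orthonormal hu huv)
      (pairwise_inner_add_eq_zero hu hv huv)
      fun i => le_topologicalClosure _ (subset_span ⟨i, rfl⟩),
    not_finiteDimensional_of_inner_eq_zero (sub_ne_zero_of_orthonormal hu huv)
      (pairwise_inner_sub_eq_zero hu hv huv)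
      fun j => mem_orthogonal_closure_span_range_iff.mpr (inner_add_sub_eq_zero hu hv huv · j)⟩

theorem IsLinOrConjIsometry.mem_of_apply_mem_span_image {L : H → H} (hL : IsLinOrConjIsometry L)
    {B : Submodule ℂ H} {a : H} (h : L a ∈ span ℂ (L '' B)) : a ∈ B := by
  rcases hL with ⟨T, hT⟩ | ⟨T, hT⟩ <;>
  · obtain rfl : L = T := funext hT
    exact (apply_mem_span_image_iff_mem (f := T.toLinearMap) T.injective B).mp h

namespace Decomposes

variable {f : Submodule ℂ H → Submodule ℂ H} {L : H → H} {O : Submodule ℂ H → Submodule ℂ H}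
  {A B : Submodule ℂ H}

theorem O_le (hdec : Decomposes f L O) (hB : inGinf B) : O B ≤ f B := by
  rw [(hdec B hB).2.2]
  exact le_sup_right

theorem O_le_orthogonal_span_range (hdec : Decomposes f L O) (hB : inGinf B) :
    O B ≤ (span ℂ (range L))ᗮ := fun y hy =>
  (mem_orthogonal _ _).mpr fun z hz => by
    refine span_induction (fun _ ⟨x, hx⟩ => hx ▸ (hdec B hB).2.1 y hy x) (inner_zero_left _)
      (fun _ _ _ _ h₁ h₂ => ?_) (fun c _ _ h => ?_) hz
    · rw [inner_add_left, h₁, h₂, add_zero]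
    · rw [inner_smul_left, h, mul_zero]

theorem isOrtho_O_of_O_eq_bot (hdec : Decomposes f L O) (hA : inGinf A) (hB : inGinf B)
    (hOA : O A = ⊥) : f A ⟂ O B := by
  refine IsOrtho.symm (le_trans (hdec.O_le_orthogonal_span_range hB) (orthogonal_le ?_))
  rw [(hdec A hA).2.2, hOA, sup_bot_eq]
  exact span_mono (image_subset_range _ _)

theorem mem_of_apply_mem (hdec : Decomposes f L O) (hL : IsLinOrConjIsometry L) (hB : inGinf B)
    {a : H} (ha : L a ∈ f B) : a ∈ B := by
  rw [(hdec B hB).2.2] at ha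
  obtain ⟨s, hs, o, ho, hso⟩ := mem_sup.mp ha
  -- `o = L a - s` lies in the span of the range of `L`, to which `O B` is orthogonal
  have hsL : s ∈ span ℂ (range L) := span_mono (image_subset_range _ _) hs
  have hoL : o ∈ span ℂ (range L) := by
    rw [eq_sub_of_add_eq' hso]
    exact sub_mem (subset_span ⟨a, rfl⟩) hsL
  have ho0 : o = 0 :=
    (mem_bot ℂ).mp ((inf_orthogonal_eq_bot _).le ⟨hoL, hdec.O_le_orthogonal_span_range hB ho⟩)
  rw [ho0, add_zero] at hso
  exact hL.mem_of_apply_mem_span_image (hso ▸ hs)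

end Decomposes

namespace SendsPairsToEquiv

variable {f : Submodule ℂ H → Submodule ℂ H} {L : H → H} {O : Submodule ℂ H → Submodule ℂ H}
  {A B : Submodule ℂ H}

theorem O_eq_bot_of_inf_orthogonal_eq_bot (hpair : SendsPairsToEquiv f)
    (hdec : Decomposes f L O) (hA : inGinf A) (hB : inGinf B) (hOA : O A = ⊥)
    (hAB : A ⊓ Bᗮ = ⊥) (hBA : B ⊓ Aᗮ = ⊥) : O B = ⊥ := by
  obtain ⟨T, hT⟩ := hpair A B hA hB
  have hfA := hdec.isOrtho_O_of_O_eq_bot hA hB hOA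
  have hOB := hdec.O_le hB
  rcases Set.pair_eq_pair_iff.mp hT with ⟨h₁, h₂⟩ | ⟨h₁, h₂⟩
  · exact eq_bot_of_le_map_of_isOrtho T (h₂ ▸ hOB) (h₁ ▸ hfA) hBA
  · exact eq_bot_of_le_map_of_isOrtho T (h₂ ▸ hOB) (h₁ ▸ hfA) hAB

theorem O_eq_bot_of_le (hpair : SendsPairsToEquiv f) (hL : IsLinOrConjIsometry L)
    (hdec : Decomposes f L O) (hA : inGinf A) (hB : inGinf B) (hOA : O A = ⊥) (hBA : B ≤ A) :
    O B = ⊥ := by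
  obtain ⟨T, hT⟩ := hpair A B hA hB
  rcases Set.pair_eq_pair_iff.mp hT with ⟨h₁, h₂⟩ | ⟨h₁, h₂⟩
  · refine eq_bot_of_le_map_of_isOrtho T (h₂ ▸ hdec.O_le hB)
      (h₁ ▸ hdec.isOrtho_O_of_O_eq_bot hA hB hOA) (eq_bot_iff.mpr ?_)
    exact (inf_le_inf_right _ hBA).trans (inf_orthogonal_eq_bot A).le
  -- here `f A = T B ≤ T A = f B`, which forces `A = B`
  · have hfAB : f A ≤ f B := h₁ ▸ h₂ ▸ map_mono hBA
    have hAB : A ≤ B := fun a ha => hdec.mem_of_apply_mem hL hB (hfAB (by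
      rw [(hdec A hA).2.2, hOA, sup_bot_eq]
      exact subset_span ⟨a, ha, rfl⟩))
    exact le_antisymm hAB hBA ▸ hOA

theorem O_closure_span_range_eq_bot (hpair : SendsPairsToEquiv f) (hdec : Decomposes f L O)
    {u v : ℕ → H} (hu : Orthonormal ℂ u) (hv : Orthonormal ℂ v) (huv : ∀ i j, ⟪u i, v j⟫_ℂ = 0)
    (hOu : O (span ℂ (range u)).topologicalClosure = ⊥) :
    O (span ℂ (range v)).topologicalClosure = ⊥ := by
  have hvu : ∀ i j, ⟪v i, u j⟫_ℂ = 0 := fun i j => inner_eq_zero_symm.mp (huv j i)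
  have hC := inGinf_closure_span_range_add hu hv huv
  have hOC := hpair.O_eq_bot_of_inf_orthogonal_eq_bot hdec (inGinf_closure_span_range hu hv huv)
    hC hOu (closure_span_inf_orthogonal_closure_span_add_eq_bot huv)
    (closure_span_add_inf_orthogonal_closure_span_eq_bot hu hv huv)
  rw [← add_comm v u] at hC hOC
  exact hpair.O_eq_bot_of_inf_orthogonal_eq_bot hdec hC (inGinf_closure_span_range hv hu hvu) hOC
    (closure_span_add_inf_orthogonal_closure_span_eq_bot hv hu hvu)
    (closure_span_inf_orthogonal_closure_span_add_eq_bot hvu)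

end SendsPairsToEquiv

theorem stmt16_general [TopologicalSpace.SeparableSpace H]
    (f : Submodule ℂ H → Submodule ℂ H)
    (hpair : SendsPairsToEquiv f)
    (L : H → H) (hL : IsLinOrConjIsometry L)
    (O : Submodule ℂ H → Submodule ℂ H) (hdec : Decomposes f L O)
    (hO : ∃ X : Submodule ℂ H, inGinf X ∧ O X = ⊥) :
    ∀ Y : Submodule ℂ H, inGinf Y → O Y = ⊥ ∧ f Y = Submodule.span ℂ (L '' Y) := by
  obtain ⟨X, hX, hOX⟩ := hO
  intro Y hY
  obtain ⟨x, w, hx, hw, hxw, hxX, hwY⟩ := exists_orthonormal_pair hX.2.1 hY.2.2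
  obtain ⟨g, hg, hgY⟩ := exists_orthonormal_closure_span_range_eq hY.1 hY.2.1
  have hwg : ∀ i j, ⟪w i, g j⟫_ℂ = 0 := fun i j =>
    inner_left_of_mem_orthogonal (hgY ▸ le_topologicalClosure _ (subset_span ⟨j, rfl⟩)) (hwY i)
  have hOx : O (span ℂ (range x)).topologicalClosure = ⊥ :=
    hpair.O_eq_bot_of_le hL hdec hX (inGinf_closure_span_range hx hw hxw) hOX
      (topologicalClosure_minimal _ (span_le.mpr (range_subset_iff.mpr hxX)) hX.1)
  have hOY : O Y = ⊥ := hgY ▸ hpair.O_closure_span_range_eq_bot hdec hw hg hwg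
    (hpair.O_closure_span_range_eq_bot hdec hx hw hxw hOx)
  exact ⟨hOY, by rw [(hdec Y hY).2.2, hOY, sup_bot_eq]⟩

/-- Proposition: if `H` is separable and `O X = ⊥` for some
`X ∈ G_∞(H)`, then `O Y = ⊥` for every `Y ∈ G_∞(H)`, i.e. `f Y = L(Y)` for all `Y`. -/
theorem stmt16 [TopologicalSpace.SeparableSpace H] (hH : ¬ FiniteDimensional ℂ H)
    (f : Submodule ℂ H → Submodule ℂ H)
    (hf : ∀ X, inGinf X → inGinf (f X))
    (hpair : SendsPairsToEquiv f)
    (L : H → H) (hL : IsLinOrConjIsometry L)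
    (O : Submodule ℂ H → Submodule ℂ H) (hdec : Decomposes f L O)
    (hO : ∃ X : Submodule ℂ H, inGinf X ∧ O X = ⊥) :
    ∀ Y : Submodule ℂ H, inGinf Y → O Y = ⊥ ∧ f Y = Submodule.span ℂ (L '' Y) :=
  stmt16_general f hpair L hL O hdec hO
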